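/- arXiv:1112.6400 — 2 statements merged into one kernel-verified Lean document; each statement's English description precedes it below -/
import Mathlib

section
/- Fix an integer n ≥ 1, a natural number K, and rational numbers a_β for each β ∈ ℕ^n with |β| = K. Suppose q : ℕ^n → ℚ satisfies: (i) q(m) = 0 whenever m_1 + ⋯ + m_n < K; (ii) q(m) = (∏_{i=1}^n m_i!) · a_m whenever m_1 + ⋯ + m_n = K; (iii) ((m_1 + ⋯ + m_n) − K) · q(m) = Σ_{i=1}^n m_i · q(m_1,…,m_i − 1,…,m_n) whenever m_1 + ⋯ + m_n > K (summands with m_i = 0 interpreted as 0). Then for all m ∈ ℕ^n, q(m) = Σ_{|β| = K} (∏_{i=1}^n C(m_i, β_i) · β_i!) · a_β. -/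
open Finset

/-- The binomial sum `p(m) = Σ_{|β| = K} (∏_i C(m_i, β_i) · β_i!) · a_β`. -/
noncomputable def binomSum (n K : ℕ) (a : (Fin n → ℕ) → ℚ) (m : Fin n → ℕ) : ℚ :=
  ∑ β ∈ Finset.Nat.antidiagonalTuple n K,
    (∏ i, ((Nat.choose (m i) (β i) : ℚ) * (Nat.factorial (β i) : ℚ))) * a β

lemma key_choose (m b : ℕ) :
    (m : ℚ) * (Nat.choose (m - 1) b : ℚ) = ((m : ℚ) - (b : ℚ)) * (Nat.choose m b : ℚ) := by
  rcases Nat.lt_or_ge m (b + 1) with h | h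
  · rcases Nat.lt_or_ge m b with h' | h'
    · rw [Nat.choose_eq_zero_of_lt h',
        Nat.choose_eq_zero_of_lt (lt_of_le_of_lt (Nat.sub_le m 1) h')]
      ring
    · have hb : m = b := le_antisymm (Nat.lt_succ_iff.mp h) h'
      subst hb
      rcases Nat.eq_zero_or_pos m with h0 | h0
      · subst h0; simp
      · rw [Nat.choose_eq_zero_of_lt (by omega : m - 1 < m)]
        simp
  · have hm : 0 < m := by omega
    have hnat : m * Nat.choose (m - 1) b = Nat.choose m b * (m - b) := by
      have h1 := Nat.add_one_mul_choose_eq (m - 1) b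
      rw [Nat.sub_add_cancel hm] at h1
      rw [h1, Nat.choose_succ_right_eq]
    have hc := congrArg (fun x : ℕ => (x : ℚ)) hnat
    push_cast [Nat.cast_sub (by omega : b ≤ m)] at hc
    linarith

lemma binomSum_lt (n K : ℕ) (a : (Fin n → ℕ) → ℚ) (m : Fin n → ℕ)
    (h : (∑ i, m i) < K) : binomSum n K a m = 0 := by
  unfold binomSum
  apply Finset.sum_eq_zero
  intro β hβ
  rw [Finset.Nat.mem_antidiagonalTuple] at hβ
  have : ∃ i, m i < β i := by
    by_contra hc
    push_neg at hc
    have : (∑ i, β i) ≤ ∑ i, m i := Finset.sum_le_sum fun i _ => hc i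
    omega
  obtain ⟨i, hi⟩ := this
  have : (Nat.choose (m i) (β i) : ℚ) * (Nat.factorial (β i) : ℚ) = 0 := by
    rw [Nat.choose_eq_zero_of_lt hi]; simp
  rw [Finset.prod_eq_zero (Finset.mem_univ i) this, zero_mul]

lemma binomSum_eq (n K : ℕ) (a : (Fin n → ℕ) → ℚ) (m : Fin n → ℕ)
    (h : (∑ i, m i) = K) :
    binomSum n K a m = (∏ i, (Nat.factorial (m i) : ℚ)) * a m := by
  unfold binomSum
  rw [Finset.sum_eq_single m]
  · congr 1
    apply Finset.prod_congr rfl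
    intro i _
    rw [Nat.choose_self]; simp
  · intro β hβ hne
    rw [Finset.Nat.mem_antidiagonalTuple] at hβ
    have : ∃ i, m i < β i := by
      by_contra hc
      push_neg at hc
      have hle : ∀ i, β i ≤ m i := hc
      have : β = m := by
        funext i
        by_contra hne2
        have hlt : β i < m i := lt_of_le_of_ne (hle i) hne2
        have h1 : (∑ j, β j) < ∑ j, m j :=
          Finset.sum_lt_sum (fun j _ => hle j) ⟨i, Finset.mem_univ i, hlt⟩
        omega
      exact hne this
    obtain ⟨i, hi⟩ := this
    have : (Nat.choose (m i) (β i) : ℚ) * (Nat.factorial (β i) : ℚ) = 0 := by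
      rw [Nat.choose_eq_zero_of_lt hi]; simp
    rw [Finset.prod_eq_zero (Finset.mem_univ i) this, zero_mul]
  · intro hm
    exact absurd (Finset.Nat.mem_antidiagonalTuple.mpr h) hm

lemma binomSum_string (n K : ℕ) (a : (Fin n → ℕ) → ℚ) (m : Fin n → ℕ) :
    ((∑ i, (m i : ℚ)) - (K : ℚ)) * binomSum n K a m
      = ∑ i, (m i : ℚ) * binomSum n K a (Function.update m i (m i - 1)) := by
  unfold binomSum
  simp_rw [Finset.mul_sum]
  rw [Finset.sum_comm]
  apply Finset.sum_congr rfl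
  intro β hβ
  rw [Finset.Nat.mem_antidiagonalTuple] at hβ
  have key : ∀ i : Fin n,
      (m i : ℚ) * ((∏ j, ((Nat.choose (Function.update m i (m i - 1) j) (β j) : ℚ)
          * (Nat.factorial (β j) : ℚ))) * a β)
      = ((m i : ℚ) - (β i : ℚ)) *
          ((∏ j, ((Nat.choose (m j) (β j) : ℚ) * (Nat.factorial (β j) : ℚ))) * a β) := by
    intro i
    rw [← Finset.mul_prod_erase Finset.univ _ (Finset.mem_univ i),
        ← Finset.mul_prod_erase Finset.univ
          (fun j => ((Nat.choose (m j) (β j) : ℚ) * (Nat.factorial (β j) : ℚ)))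
          (Finset.mem_univ i)]
    have hrest : (∏ j ∈ Finset.univ.erase i,
        ((Nat.choose (Function.update m i (m i - 1) j) (β j) : ℚ)
          * (Nat.factorial (β j) : ℚ)))
        = ∏ j ∈ Finset.univ.erase i,
            ((Nat.choose (m j) (β j) : ℚ) * (Nat.factorial (β j) : ℚ)) := by
      apply Finset.prod_congr rfl
      intro j hj
      rw [Function.update_of_ne (Finset.mem_erase.mp hj).1]
    rw [hrest, Function.update_self]
    have hkc := key_choose (m i) (β i)
    linear_combination ((Nat.factorial (β i) : ℚ) *
      (∏ j ∈ Finset.univ.erase i,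
        ((Nat.choose (m j) (β j) : ℚ) * (Nat.factorial (β j) : ℚ))) * a β) * hkc
  symm
  calc ∑ i, (m i : ℚ) * ((∏ j, ((Nat.choose (Function.update m i (m i - 1) j) (β j) : ℚ)
          * (Nat.factorial (β j) : ℚ))) * a β)
      = ∑ i, ((m i : ℚ) - (β i : ℚ)) *
          ((∏ j, ((Nat.choose (m j) (β j) : ℚ) * (Nat.factorial (β j) : ℚ))) * a β) := by
        exact Finset.sum_congr rfl fun i _ => key i
    _ = ((∑ i, (m i : ℚ)) - (K : ℚ)) *
          ((∏ j, ((Nat.choose (m j) (β j) : ℚ) * (Nat.factorial (β j) : ℚ))) * a β) := by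
        rw [← Finset.sum_mul, Finset.sum_sub_distrib]
        congr 2
        rw [← hβ]
        push_cast
        rfl

/-- A function which vanishes below the dimension constraint, agrees with
`(∏ m_i!) · a_m` on it, and satisfies the string equation above it, is given by
the explicit binomial formula. -/
theorem eq_binomSum_of_string_equation (n K : ℕ) (hn : 1 ≤ n)
    (a : (Fin n → ℕ) → ℚ) (q : (Fin n → ℕ) → ℚ)
    (h0 : ∀ m : Fin n → ℕ, (∑ i, m i) < K → q m = 0)
    (h1 : ∀ m : Fin n → ℕ, (∑ i, m i) = K →
      q m = (∏ i, (Nat.factorial (m i) : ℚ)) * a m)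
    (h2 : ∀ m : Fin n → ℕ, K < (∑ i, m i) →
      ((∑ i, (m i : ℚ)) - (K : ℚ)) * q m =
        ∑ i, (m i : ℚ) * q (Function.update m i (m i - 1))) :
    ∀ m : Fin n → ℕ, q m = binomSum n K a m := by
  suffices H : ∀ N (m : Fin n → ℕ), (∑ i, m i) = N → q m = binomSum n K a m by
    intro m; exact H _ m rfl
  intro N
  induction N using Nat.strong_induction_on with
  | _ N ih =>
    intro m hm
    rcases lt_trichotomy (∑ i, m i) K with h | h | h
    · rw [h0 m h, binomSum_lt n K a m h]
    · rw [h1 m h, ← binomSum_eq n K a m h]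
    · have hcast : (∑ i, (m i : ℚ)) = ((∑ i, m i : ℕ) : ℚ) := by push_cast; rfl
      have hS : ((∑ i, (m i : ℚ)) - (K : ℚ)) ≠ 0 := by
        have : (K : ℚ) < ∑ i, (m i : ℚ) := by rw [hcast]; exact_mod_cast h
        linarith
      have e3 : ∑ i, (m i : ℚ) * q (Function.update m i (m i - 1))
          = ∑ i, (m i : ℚ) * binomSum n K a (Function.update m i (m i - 1)) := by
        apply Finset.sum_congr rfl
        intro i _
        rcases Nat.eq_zero_or_pos (m i) with h0i | h0i
        · simp [h0i]
        · congr 1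
          apply ih (N - 1) (by omega) _ ?_
          rw [Finset.sum_update_of_mem (Finset.mem_univ i)]
          have hsd := Finset.sum_eq_sum_sdiff_singleton_add (Finset.mem_univ i) m
          omega
      exact mul_left_cancel₀ hS ((h2 m h).trans (e3.trans (binomSum_string n K a m).symm))
end

section
/- For every polynomial Q with rational coefficients there exist a polynomial R with rational coefficients and a natural number k such that for all real z > 1 the series Σ_{a=0}^∞ Q(a) · C(2a, a) · (z + 1/z)^{−2a−1} converges and equals R(z)/(z² − 1)^k, where C(2a,a) is the central binomial coefficient. -/
open Finset

namespace WCBR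

lemma centralBinom_le_four_pow (n : ℕ) : Nat.centralBinom n ≤ 4 ^ n := by
  induction n with
  | zero => simp [Nat.centralBinom]
  | succ n ih =>
    have h := Nat.succ_mul_centralBinom_succ n
    have h2 : (n+1) * Nat.centralBinom (n+1) ≤ (n+1) * 4 ^ (n+1) := by
      rw [h]
      calc 2*(2*n+1) * Nat.centralBinom n ≤ (4*(n+1)) * 4^n :=
            Nat.mul_le_mul (by omega) ih
        _ = (n+1) * 4^(n+1) := by ring
    exact Nat.le_of_mul_le_mul_left h2 (Nat.succ_pos n)

lemma catalan_le_centralBinom (n : ℕ) : catalan n ≤ Nat.centralBinom n := by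
  have h := succ_mul_catalan_eq_centralBinom n
  nlinarith [Nat.zero_le (n * catalan n)]

lemma catalan_le_four_pow (n : ℕ) : catalan n ≤ 4 ^ n :=
  (catalan_le_centralBinom n).trans (centralBinom_le_four_pow n)

/-- `centralBinom (a+1) + 2 * catalan a = 4 * centralBinom a` -/
lemma cb_succ_id (a : ℕ) :
    Nat.centralBinom (a+1) + 2 * catalan a = 4 * Nat.centralBinom a := by
  have h1 := Nat.succ_mul_centralBinom_succ a
  have h2 := succ_mul_catalan_eq_centralBinom a
  have h3 : (a+1) * (Nat.centralBinom (a+1) + 2 * catalan a)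
      = (a+1) * (4 * Nat.centralBinom a) := by
    rw [Nat.mul_add, h1]
    nlinarith [h2]
  exact Nat.eq_of_mul_eq_mul_left (Nat.succ_pos a) h3

/-- partial sums of `catalan a / 4^a` -/
lemma catalan_partial (N : ℕ) :
    ∑ a ∈ range N, (catalan a : ℝ) / 4 ^ a
      = 2 - 2 * (Nat.centralBinom N : ℝ) / 4 ^ N := by
  induction N with
  | zero => simp [Nat.centralBinom]
  | succ N ih =>
    rw [Finset.sum_range_succ, ih]
    have key : (Nat.centralBinom (N+1) : ℝ) + 2 * catalan N = 4 * Nat.centralBinom N := by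
      exact_mod_cast cb_succ_id N
    linear_combination ((1:ℝ)/(2*4^N)) * key


/-- key step identity in ℕ -/
lemma step_id (m a : ℕ) :
    (m+1) * ((a+1).choose (m+1) * Nat.centralBinom (a+1))
      = (4*(m+1) * (a.choose (m+1)) + 2*(2*m+1) * a.choose m) * Nat.centralBinom a := by
  have h1 : (a+1) * a.choose m = (a+1).choose (m+1) * (m+1) := Nat.add_one_mul_choose_eq a m
  have h2 := Nat.succ_mul_centralBinom_succ a
  have h3 : 2*(2*a+1) * a.choose m = 4*(m+1) * a.choose (m+1) + 2*(2*m+1) * a.choose m := by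
    rcases le_or_gt m a with h | h
    · have h4 := Nat.choose_succ_right_eq a m
      zify [h] at h4 ⊢
      nlinarith [h4]
    · rw [Nat.choose_eq_zero_of_lt h, Nat.choose_eq_zero_of_lt (Nat.lt_succ_of_lt h)]
      ring
  calc (m+1) * ((a+1).choose (m+1) * Nat.centralBinom (a+1))
      = ((a+1).choose (m+1) * (m+1)) * Nat.centralBinom (a+1) := by ring
    _ = ((a+1) * a.choose m) * Nat.centralBinom (a+1) := by rw [h1]
    _ = a.choose m * ((a+1) * Nat.centralBinom (a+1)) := by ring
    _ = a.choose m * (2*(2*a+1) * Nat.centralBinom a) := by rw [h2]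
    _ = (2*(2*a+1) * a.choose m) * Nat.centralBinom a := by ring
    _ = _ := by rw [h3]

section Real

variable {z : ℝ}

lemma hx2 (hz : 1 < z) : 2 < z + 1/z := by
  have h0 : 0 < z := lt_trans one_pos hz
  have h : z + 1/z - 2 = (z-1)^2 / z := by field_simp; ring
  have hp : 0 < (z-1)^2 / z := div_pos (pow_pos (by linarith) 2) h0
  linarith

lemma summable_master {x : ℝ} (hx : 2 < x) (m : ℕ) :
    Summable (fun a : ℕ => (a.choose m : ℝ) * (Nat.centralBinom a : ℝ)
      * (((x^2)⁻¹)^a * x⁻¹)) := by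
  have hx0 : (0:ℝ) < x := by linarith
  have hr0 : (0:ℝ) ≤ 4 / x^2 := by positivity
  have hr : ‖(4 / x^2 : ℝ)‖ < 1 := by
    rw [Real.norm_eq_abs, abs_of_nonneg hr0, div_lt_one (by positivity)]
    nlinarith
  have hs := (summable_pow_mul_geometric_of_norm_lt_one m hr).mul_right (x⁻¹)
  refine Summable.of_nonneg_of_le (fun a => by positivity) (fun a => ?_) hs
  have h1 : (a.choose m : ℝ) ≤ (a:ℝ)^m := by exact_mod_cast Nat.choose_le_pow a m
  have h2 : (Nat.centralBinom a : ℝ) ≤ 4^a := by exact_mod_cast centralBinom_le_four_pow a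
  have h3 : (Nat.centralBinom a : ℝ) * ((x^2)⁻¹)^a ≤ (4/x^2)^a := by
    rw [div_pow, div_eq_mul_inv, inv_pow]
    exact mul_le_mul_of_nonneg_right h2 (by positivity)
  calc (a.choose m : ℝ) * (Nat.centralBinom a : ℝ) * (((x^2)⁻¹)^a * x⁻¹)
      = ((a.choose m : ℝ)) * ((Nat.centralBinom a : ℝ) * ((x^2)⁻¹)^a) * x⁻¹ := by ring
    _ ≤ (a:ℝ)^m * (4/x^2)^a * x⁻¹ := by
        apply mul_le_mul_of_nonneg_right _ (by positivity)
        exact mul_le_mul h1 h3 (by positivity) (by positivity)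

lemma summable_catalan {x : ℝ} (hx : 2 < x) :
    Summable (fun a : ℕ => (catalan a : ℝ) * ((x^2)⁻¹)^a) := by
  have hx0 : (0:ℝ) < x := by linarith
  have hr0 : (0:ℝ) ≤ 4 / x^2 := by positivity
  have hr : (4 / x^2 : ℝ) < 1 := by
    rw [div_lt_one (by positivity)]; nlinarith
  refine Summable.of_nonneg_of_le (fun a => by positivity) (fun a => ?_)
    (summable_geometric_of_lt_one hr0 hr)
  have h2 : (catalan a : ℝ) ≤ 4^a := by exact_mod_cast catalan_le_four_pow a
  calc (catalan a : ℝ) * ((x^2)⁻¹)^a ≤ (4:ℝ)^a * ((x^2)⁻¹)^a :=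
        mul_le_mul_of_nonneg_right h2 (by positivity)
    _ = (4/x^2)^a := by rw [div_pow, div_eq_mul_inv, inv_pow]

/-- The Catalan generating function value. -/
lemma catalan_hasSum (hz : 1 < z) :
    HasSum (fun a : ℕ => (catalan a : ℝ) * (((z+1/z)^2)⁻¹)^a) ((z^2+1)/z^2) := by
  have hx : 2 < z + 1/z := hx2 hz
  have hx0 : (0:ℝ) < z + 1/z := by linarith
  have hz0 : (0:ℝ) < z := lt_trans one_pos hz
  set x := z + 1/z with hxdef
  set g : ℕ → ℝ := fun a => (catalan a : ℝ) * (((x)^2)⁻¹)^a with hgdef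
  have hg : Summable g := summable_catalan hx
  have hgnn : ∀ a, 0 ≤ g a := fun a => by positivity
  have hD : HasSum g (∑' a, g a) := hg.hasSum
  set D := ∑' a, g a with hDdef
  -- bound : D ≤ 2
  have hDle : D ≤ 2 := by
    apply Summable.tsum_le_of_sum_range_le hg
    intro n
    have hstep : ∀ a : ℕ, g a ≤ (catalan a : ℝ) / 4^a := by
      intro a
      rw [div_eq_mul_inv, ← inv_pow]
      apply mul_le_mul_of_nonneg_left _ (by positivity)
      apply pow_le_pow_left₀ (by positivity)
      rw [inv_le_inv₀ (by positivity) (by norm_num)]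
      nlinarith
    calc ∑ a ∈ range n, g a ≤ ∑ a ∈ range n, (catalan a : ℝ) / 4^a :=
          Finset.sum_le_sum (fun a _ => hstep a)
      _ = 2 - 2 * (Nat.centralBinom n : ℝ) / 4^n := catalan_partial n
      _ ≤ 2 := by
          have : (0:ℝ) ≤ 2 * (Nat.centralBinom n : ℝ) / 4^n := by positivity
          linarith
  -- Cauchy product
  have hg' : Summable (fun a => ‖g a‖) := by
    simpa [Real.norm_eq_abs, abs_of_nonneg (hgnn _)] using hg
  have hcauchy : D * D = ∑' n, ∑ kl ∈ Finset.HasAntidiagonal.antidiagonal n, g kl.1 * g kl.2 :=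
    tsum_mul_tsum_eq_tsum_sum_antidiagonal_of_summable_norm hg' hg'
  have hinner : ∀ n, ∑ kl ∈ Finset.HasAntidiagonal.antidiagonal n, g kl.1 * g kl.2
      = (catalan (n+1) : ℝ) * (((x)^2)⁻¹)^n := by
    intro n
    rw [catalan_succ']
    push_cast
    rw [Finset.sum_mul]
    apply Finset.sum_congr rfl
    intro kl hkl
    have hkl' : kl.1 + kl.2 = n := Finset.HasAntidiagonal.mem_antidiagonal.mp hkl
    simp only [hgdef]
    rw [← hkl', pow_add]
    ring
  have hshift : HasSum (fun n => g (n+1)) (D - 1) := by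
    have h0 : HasSum g ((D - 1) + ∑ i ∈ range 1, g i) := by
      have : g 0 = 1 := by simp [hgdef]
      simpa [this] using hD
    exact (hasSum_nat_add_iff 1).mpr h0
  -- evaluate the RHS tsum
  have hxne : x ≠ 0 := ne_of_gt hx0
  have hrhs : HasSum (fun n => (catalan (n+1) : ℝ) * (((x)^2)⁻¹)^n) ((x^2) * (D - 1)) := by
    have h := hshift.mul_left (x^2)
    have heq : (fun n => (x^2) * g (n+1)) = fun n => (catalan (n+1) : ℝ) * (((x)^2)⁻¹)^n := by
      funext n
      simp only [hgdef]
      rw [pow_succ]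
      have hxx2 : x^2 * (x^2)⁻¹ = 1 := mul_inv_cancel₀ (pow_ne_zero 2 hxne)
      linear_combination ((catalan (n+1) : ℝ) * ((x^2)⁻¹)^n) * hxx2
    rwa [heq] at h
  have hquad : D * D = (x^2) * (D - 1) := by
    rw [hcauchy, tsum_congr hinner, hrhs.tsum_eq]
  have hxx : x^2 * z^2 = (z^2+1)^2 := by
    rw [hxdef]; field_simp
  have hz2 : (z:ℝ)^2 ≠ 0 := by positivity
  have hquad' : z^2*(D*D) = (z^2+1)^2*(D-1) := by
    calc z^2*(D*D) = (x^2*z^2)*(D-1) := by rw [hquad]; ring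
      _ = (z^2+1)^2*(D-1) := by rw [hxx]
  have hfac : (z^2*D - (z^2+1)) * (D - (z^2+1)) = 0 := by
    linear_combination hquad'
  have h2' : D - (z^2+1) ≠ 0 := by
    have hlt : (2:ℝ) < z^2 + 1 := by nlinarith
    have : D - (z^2+1) < 0 := by linarith
    exact ne_of_lt this
  have hDval : D = (z^2+1)/z^2 := by
    have h := (mul_eq_zero.mp hfac).resolve_right h2'
    rw [eq_div_iff hz2]
    linarith [h]
  rw [← hDval]
  exact hD


lemma basis_hasSum (hz : 1 < z) (m : ℕ) :
    HasSum (fun a : ℕ => (a.choose m : ℝ) * (Nat.centralBinom a : ℝ)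
        * ((((z+1/z)^2)⁻¹)^a * (z+1/z)⁻¹))
      ((Nat.centralBinom m : ℝ) * z^(2*m+1) / (z^2-1)^(2*m+1)) := by
  have hx : 2 < z + 1/z := hx2 hz
  have hx0 : (0:ℝ) < z + 1/z := by linarith
  have hz0 : (0:ℝ) < z := lt_trans one_pos hz
  have hzne : z ≠ 0 := ne_of_gt hz0
  have hxne : z + 1/z ≠ 0 := ne_of_gt hx0
  have hz1 : (0:ℝ) < z^2 - 1 := by nlinarith
  have hz1ne : z^2 - 1 ≠ 0 := ne_of_gt hz1
  have hz21 : (z:ℝ)^2 + 1 ≠ 0 := by positivity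
  set u : ℝ := ((z+1/z)^2)⁻¹ with hudef
  have hu : u * (z+1/z)^2 = 1 := inv_mul_cancel₀ (pow_ne_zero 2 hxne)
  have hxw : (z + 1/z) * z = z^2 + 1 := by field_simp
  have huw : u * (z^2+1)^2 = z^2 := by
    calc u*(z^2+1)^2 = u*((z+1/z)^2 * z^2) := by rw [← hxw]; ring
      _ = (u*(z+1/z)^2) * z^2 := by ring
      _ = z^2 := by rw [hu]; ring
  have huval : u = z^2/(z^2+1)^2 := by
    rw [eq_div_iff (pow_ne_zero 2 hz21)]; exact huw
  have hxinv : (z+1/z)⁻¹ = z/(z^2+1) := by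
    rw [eq_div_iff hz21]
    calc (z+1/z)⁻¹*(z^2+1) = (z+1/z)⁻¹*((z+1/z)*z) := by rw [hxw]
      _ = ((z+1/z)⁻¹*(z+1/z))*z := by ring
      _ = z := by rw [inv_mul_cancel₀ hxne]; ring
  induction m with
  | zero =>
    set f : ℕ → ℝ := fun a => (a.choose 0 : ℝ) * (Nat.centralBinom a : ℝ)
        * (u^a * (z+1/z)⁻¹) with hfdef
    have hsum : Summable f := summable_master hx 0
    have hA : HasSum f (∑' a, f a) := hsum.hasSum
    set A := ∑' a, f a with hAdef
    have hf0 : f 0 = (z+1/z)⁻¹ := by simp [hfdef, Nat.centralBinom]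
    have hshift : HasSum (fun a => f (a+1)) (A - (z+1/z)⁻¹) := by
      have h0 : HasSum f ((A - (z+1/z)⁻¹) + ∑ i ∈ range 1, f i) := by
        simpa [hf0] using hA
      exact (hasSum_nat_add_iff 1).mpr h0
    have hD := catalan_hasSum hz
    have hcomb : HasSum (fun a => 4*u * f a - 2*u*(z+1/z)⁻¹ * ((catalan a : ℝ) * u^a))
        (4*u*A - 2*u*(z+1/z)⁻¹ * ((z^2+1)/z^2)) :=
      (hA.mul_left (4*u)).sub (hD.mul_left (2*u*(z+1/z)⁻¹))
    have hpt : ∀ a : ℕ, f (a+1)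
        = 4*u * f a - 2*u*(z+1/z)⁻¹ * ((catalan a : ℝ) * u^a) := by
      intro a
      have hid : (Nat.centralBinom (a+1) : ℝ) + 2 * catalan a = 4 * Nat.centralBinom a := by
        exact_mod_cast cb_succ_id a
      simp only [hfdef, Nat.choose_zero_right, Nat.cast_one, one_mul, pow_succ]
      linear_combination (u^a * u * (z+1/z)⁻¹) * hid
    have heq : A - (z+1/z)⁻¹ = 4*u*A - 2*u*(z+1/z)⁻¹ * ((z^2+1)/z^2) :=
      HasSum.unique (by simpa [funext hpt] using hshift) hcomb
    have hval : A = z/(z^2-1) := by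
      rw [huval, hxinv] at heq
      field_simp at heq
      rw [eq_div_iff hz1ne]
      have hK : (z^2*(z^2+1)^4*(z^2-1) : ℝ) ≠ 0 :=
        mul_ne_zero (mul_ne_zero (pow_ne_zero 2 hzne) (pow_ne_zero 4 hz21)) hz1ne
      apply mul_left_cancel₀ hK
      linear_combination (z^2*(z^2+1)^4) * heq
    have : HasSum f (z/(z^2-1)) := hval ▸ hA
    simpa [hfdef, Nat.centralBinom] using this
  | succ m ih =>
    set f : ℕ → ℝ := fun a => (a.choose (m+1) : ℝ) * (Nat.centralBinom a : ℝ)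
        * (u^a * (z+1/z)⁻¹) with hfdef
    have hsum : Summable f := summable_master hx (m+1)
    have hT : HasSum f (∑' a, f a) := hsum.hasSum
    set T := ∑' a, f a with hTdef
    have hf0 : f 0 = 0 := by simp [hfdef]
    have hshift : HasSum (fun a => f (a+1)) T := by
      have h0 : HasSum f (T + ∑ i ∈ range 1, f i) := by
        simpa [hf0] using hT
      have := (hasSum_nat_add_iff 1).mpr h0
      simpa using this
    have hm1 : ((m:ℝ)+1) ≠ 0 := by positivity
    set c : ℝ := 2*(2*(m:ℝ)+1) / ((m:ℝ)+1) with hcdef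
    have hc : ((m:ℝ)+1) * c = 2*(2*(m:ℝ)+1) := by
      rw [hcdef]; field_simp
    set Sm : ℝ := (Nat.centralBinom m : ℝ) * z^(2*m+1) / (z^2-1)^(2*m+1) with hSmdef
    have hcomb : HasSum (fun a => 4*u * f a + c*u * ((a.choose m : ℝ) * (Nat.centralBinom a : ℝ)
          * (u^a * (z+1/z)⁻¹))) (4*u*T + c*u*Sm) :=
      (hT.mul_left (4*u)).add (ih.mul_left (c*u))
    have hpt : ∀ a : ℕ, f (a+1)
        = 4*u * f a + c*u * ((a.choose m : ℝ) * (Nat.centralBinom a : ℝ)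
            * (u^a * (z+1/z)⁻¹)) := by
      intro a
      have hid : ((m:ℝ)+1) * ((a+1).choose (m+1) * (Nat.centralBinom (a+1) : ℝ))
          = (4*((m:ℝ)+1) * (a.choose (m+1)) + 2*(2*(m:ℝ)+1) * a.choose m)
            * Nat.centralBinom a := by
        exact_mod_cast step_id m a
      apply mul_left_cancel₀ hm1
      simp only [hfdef, pow_succ]
      calc ((m:ℝ)+1) * ((a+1).choose (m+1) * (Nat.centralBinom (a+1) : ℝ) * (u^a * u * (z+1/z)⁻¹))
          = (((m:ℝ)+1) * ((a+1).choose (m+1) * (Nat.centralBinom (a+1) : ℝ)))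
            * (u^a * u * (z+1/z)⁻¹) := by ring
        _ = ((4*((m:ℝ)+1) * (a.choose (m+1)) + 2*(2*(m:ℝ)+1) * a.choose m)
            * Nat.centralBinom a) * (u^a * u * (z+1/z)⁻¹) := by rw [hid]
        _ = _ := by
            rw [← hc]
            ring
    have heq : T = 4*u*T + c*u*Sm :=
      HasSum.unique (by simpa [funext hpt] using hshift) hcomb
    have hmcb : ((m:ℝ)+1) * (Nat.centralBinom (m+1) : ℝ)
        = 2*(2*(m:ℝ)+1) * (Nat.centralBinom m : ℝ) := by
      exact_mod_cast Nat.succ_mul_centralBinom_succ m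
    have hval : T = (Nat.centralBinom (m+1) : ℝ) * z^(2*(m+1)+1) / (z^2-1)^(2*(m+1)+1) := by
      have hzP : (z:ℝ)^(2*m+1) ≠ 0 := by positivity
      have hzW : ((z:ℝ)^2-1)^(2*m+1) ≠ 0 := pow_ne_zero _ hz1ne
      have hexp1 : (z:ℝ)^(2*(m+1)+1) = z^(2*m+1) * z^2 := by ring
      have hexp2 : ((z:ℝ)^2-1)^(2*(m+1)+1) = (z^2-1)^(2*m+1) * (z^2-1)^2 := by ring
      rw [hexp1, hexp2]
      have hSmW : Sm * (z^2-1)^(2*m+1) = (Nat.centralBinom m : ℝ) * z^(2*m+1) := by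
        rw [hSmdef]
        field_simp
      have heq' : T*(z^2+1)^2 = 4*z^2*T + c*z^2*Sm := by
        conv_lhs => rw [heq]
        calc (4*u*T + c*u*Sm)*(z^2+1)^2
            = 4*T*(u*(z^2+1)^2) + c*Sm*(u*(z^2+1)^2) := by ring
          _ = _ := by rw [huw]; ring
      rw [eq_div_iff (mul_ne_zero hzW (pow_ne_zero 2 hz1ne))]
      apply mul_left_cancel₀ hm1
      linear_combination (((m:ℝ)+1)*(z^2-1)^(2*m+1)) * heq'
        + (((m:ℝ)+1)*c*z^2) * hSmW
        + (z^2*z^(2*m+1)*(Nat.centralBinom m : ℝ)) * hc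
        - (z^2*z^(2*m+1)) * hmcb
    exact hval ▸ hT


end Real

open Polynomial in
/-- the main property -/
def SP (q : Polynomial ℚ) : Prop :=
  ∃ (R : Polynomial ℚ) (k : ℕ),
    ∀ z : ℝ, 1 < z →
      HasSum
        (fun a : ℕ =>
          ((q.eval (a : ℚ) : ℚ) : ℝ) * ((Nat.choose (2 * a) a : ℝ)) *
            ((z + 1 / z) ^ (2 * a + 1))⁻¹)
        ((Polynomial.aeval z R) / (z ^ 2 - 1) ^ k)

lemma SP_zero : SP 0 := by
  refine ⟨0, 0, fun z hz => ?_⟩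
  simpa using hasSum_zero

open Polynomial in
lemma SP_P (c : ℚ) (m : ℕ) : SP (Polynomial.C c * descPochhammer ℚ m) := by
  refine ⟨Polynomial.C (c * m.factorial * Nat.centralBinom m) * X^(2*m+1), 2*m+1,
    fun z hz => ?_⟩
  have hx : 2 < z + 1/z := hx2 hz
  have hx0 : (0:ℝ) < z + 1/z := by linarith
  have hxne : z + 1/z ≠ 0 := ne_of_gt hx0
  have h := (basis_hasSum hz m).mul_left ((c:ℝ) * m.factorial)
  have hpt : (fun a : ℕ => ((c:ℝ) * m.factorial) * ((a.choose m : ℝ) * (Nat.centralBinom a : ℝ)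
      * ((((z+1/z)^2)⁻¹)^a * (z+1/z)⁻¹)))
      = fun a : ℕ =>
        (((Polynomial.C c * descPochhammer ℚ m).eval (a : ℚ) : ℚ) : ℝ)
          * ((Nat.choose (2 * a) a : ℝ)) * ((z + 1 / z) ^ (2 * a + 1))⁻¹ := by
    funext a
    have heval : (Polynomial.C c * descPochhammer ℚ m).eval (a:ℚ)
        = c * ((m.factorial * a.choose m : ℕ) : ℚ) := by
      rw [eval_mul, eval_C, descPochhammer_eval_eq_descFactorial,
        Nat.descFactorial_eq_factorial_mul_choose]
    have hpow : ((z + 1/z) ^ (2*a+1))⁻¹ = (((z+1/z)^2)⁻¹)^a * (z+1/z)⁻¹ := by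
      rw [pow_succ, pow_mul, mul_inv, inv_pow]
    rw [heval, hpow, ← Nat.centralBinom_eq_two_mul_choose]
    push_cast
    ring
  rw [hpt] at h
  convert h using 1
  · rfl
  have : (Polynomial.aeval z) (Polynomial.C (c * m.factorial * Nat.centralBinom m) * X^(2*m+1))
      = ((c:ℝ) * m.factorial * Nat.centralBinom m) * z^(2*m+1) := by
    push_cast [map_mul, map_pow, aeval_X, aeval_C, eq_ratCast]
    ring
  rw [this]
  ring

open Polynomial in
lemma SP_add {q₁ q₂ : Polynomial ℚ} (h₁ : SP q₁) (h₂ : SP q₂) : SP (q₁ + q₂) := by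
  obtain ⟨R₁, k₁, hh₁⟩ := h₁
  obtain ⟨R₂, k₂, hh₂⟩ := h₂
  refine ⟨R₁ * (X^2 - 1)^k₂ + R₂ * (X^2 - 1)^k₁, k₁ + k₂, fun z hz => ?_⟩
  have hz0 : (0:ℝ) < z := lt_trans one_pos hz
  have hz1 : (0:ℝ) < z^2 - 1 := by nlinarith
  have hz1ne : (z:ℝ)^2 - 1 ≠ 0 := ne_of_gt hz1
  have h := (hh₁ z hz).add (hh₂ z hz)
  have hpt : (fun a : ℕ =>
      (((q₁.eval (a:ℚ) : ℚ)):ℝ) * ((Nat.choose (2*a) a : ℝ)) * ((z+1/z)^(2*a+1))⁻¹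
      + (((q₂.eval (a:ℚ) : ℚ)):ℝ) * ((Nat.choose (2*a) a : ℝ)) * ((z+1/z)^(2*a+1))⁻¹)
      = fun a : ℕ =>
      ((((q₁+q₂).eval (a:ℚ) : ℚ)):ℝ) * ((Nat.choose (2*a) a : ℝ)) * ((z+1/z)^(2*a+1))⁻¹ := by
    funext a
    rw [eval_add]
    push_cast
    ring
  rw [hpt] at h
  have haev : (Polynomial.aeval z) (R₁ * (X^2 - 1)^k₂ + R₂ * (X^2 - 1)^k₁)
      = (Polynomial.aeval z R₁) * (z^2-1)^k₂ + (Polynomial.aeval z R₂) * (z^2-1)^k₁ := by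
    simp [map_add, map_mul, map_pow, map_sub, aeval_X]
  have hval : (Polynomial.aeval z) (R₁ * (X^2 - 1)^k₂ + R₂ * (X^2 - 1)^k₁) / (z^2-1)^(k₁+k₂)
      = (Polynomial.aeval z R₁)/(z^2-1)^k₁ + (Polynomial.aeval z R₂)/(z^2-1)^k₂ := by
    rw [haev, pow_add, div_add_div _ _ (pow_ne_zero k₁ hz1ne) (pow_ne_zero k₂ hz1ne)]
    ring
  rw [hval]
  exact h

open Polynomial in
lemma SP_all : ∀ n (q : Polynomial ℚ), q.natDegree < n → SP q := by
  intro n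
  induction n with
  | zero => exact fun q h => absurd h (Nat.not_lt_zero _)
  | succ n IH =>
    intro q hq
    by_cases hq0 : q = 0
    · rw [hq0]; exact SP_zero
    · set m := q.natDegree with hm
      set c := q.leadingCoeff with hc
      have hcne : c ≠ 0 := leadingCoeff_ne_zero.mpr hq0
      set P : Polynomial ℚ := Polynomial.C c * descPochhammer ℚ m with hP
      have hmonic : (descPochhammer ℚ m).Monic := monic_descPochhammer ℚ m
      have hdne : descPochhammer ℚ m ≠ 0 := hmonic.ne_zero
      have hPlc : P.leadingCoeff = c := by
        rw [hP, leadingCoeff_mul, leadingCoeff_C, hmonic.leadingCoeff, mul_one]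
      have hPdeg : P.degree = q.degree := by
        rw [hP, degree_mul, degree_C hcne, zero_add, degree_eq_natDegree hdne,
          descPochhammer_natDegree, degree_eq_natDegree hq0]
      have hsub : SP (q - P) := by
        rcases eq_or_ne (q - P) 0 with h0 | hne
        · rw [h0]; exact SP_zero
        · apply IH
          have hdlt : (q - P).degree < q.degree :=
            degree_sub_lt hPdeg.symm hq0 hPlc.symm
          have hlt := natDegree_lt_natDegree hne hdlt
          omega
      have hfin := SP_add hsub (SP_P c m)
      rwa [sub_add_cancel] at hfin

end WCBR



/-- For every polynomial `Q` with rational coefficients there are a polynomial `R`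
with rational coefficients and a natural number `k` such that for all real `z > 1`,
`Σ_{a=0}^∞ Q(a) C(2a, a) (z + 1/z)^{−2a−1} = R(z)/(z² − 1)^k`. -/
theorem weighted_central_binomial_rationality (Q : Polynomial ℚ) :
    ∃ (R : Polynomial ℚ) (k : ℕ),
      ∀ z : ℝ, 1 < z →
        HasSum
          (fun a : ℕ =>
            ((Q.eval (a : ℚ) : ℚ) : ℝ) * ((Nat.choose (2 * a) a : ℝ)) *
              ((z + 1 / z) ^ (2 * a + 1))⁻¹)
          ((Polynomial.aeval z R) / (z ^ 2 - 1) ^ k) := by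
  obtain ⟨R, k, h⟩ := WCBR.SP_all (Q.natDegree + 1) Q (Nat.lt_succ_self _)
  exact ⟨R, k, h⟩
end
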